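/- Let V be an ℕ-graded vertex algebra with Zhu algebra A(V) = V/O(V), and let (W, Y_W) be an ℕ-gradable weak V-module with top level T(W) = {w ∈ W : u_n w = 0 whenever wt u − n − 1 < 0 for homogeneous u}. Then for every u ∈ V, the operator o(u) = Res_x x^{−1} Y_W(x^{L(0)} u, x) preserves T(W), and the map u + O(V) ↦ o(u)|_{T(W)} defines an A(V)-module structure on T(W); in particular o(u*v)w = o(u)o(v)w for u, v ∈ V, w ∈ T(W), and o(u)w = 0 for u ∈ O(V), w ∈ T(W). -/

import Mathlib

open scoped BigOperators

/-- Generalized binomial coefficient `C(a, i)` for `a : ℤ`, `i : ℕ`, valued in `ℂ`. -/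
noncomputable def gb (a : ℤ) (i : ℕ) : ℂ :=
  (∏ j ∈ Finset.range i, ((a : ℂ) - (j : ℂ))) / (Nat.factorial i : ℂ)

/-- A vertex algebra, presented through the coefficient operators
`coeff u n = u_n = Res_x x^n Y(u,x)` of its vertex operator map, together with the
vacuum, truncation, creation and Borcherds (Jacobi) identity axioms. -/
structure VertexAlgebra (V : Type*) [AddCommGroup V] [Module ℂ V] where
  coeff : V → ℤ → V →ₗ[ℂ] V
  coeff_add : ∀ (u v : V) (n : ℤ), coeff (u + v) n = coeff u n + coeff v n
  coeff_smul : ∀ (c : ℂ) (u : V) (n : ℤ), coeff (c • u) n = c • coeff u n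
  vac : V
  vac_coeff_neg_one : ∀ v : V, coeff vac (-1) v = v
  vac_coeff : ∀ n : ℤ, n ≠ -1 → coeff vac n = 0
  trunc : ∀ u v : V, ∃ N : ℤ, ∀ n ≥ N, coeff u n v = 0
  creation : ∀ (u : V) (n : ℤ), 0 ≤ n → coeff u n vac = 0
  create_neg_one : ∀ u : V, coeff u (-1) vac = u
  borcherds : ∀ (u v w : V) (p q r : ℤ),
    (∑ᶠ i : ℕ, gb p i • coeff (coeff u (r + i) v) (p + q - i) w) =
    ∑ᶠ i : ℕ, ((-1 : ℂ) ^ i * gb r i) •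
      (coeff u (p + r - i) (coeff v (q + i) w)
        - ((-1 : ℂ) ^ r) • coeff v (q + r - i) (coeff u (p + i) w))

/-- A module for a vertex algebra, presented through the coefficient operators
`Yw u n = u_n = Res_x x^n Y_W(u,x)`, with weak associativity (in coefficient form:
for every `a b : ℤ`, the coefficient of `x₀^a x₂^b` in
`(x₀+x₂)^l Y_W(u,x₀+x₂) Y_W(v,x₂) w` equals that in `(x₀+x₂)^l Y_W(Y(u,x₀)v,x₂) w`,
where `(x₀+x₂)^n` is expanded in nonnegative powers of `x₂`) as the main axiom. -/
structure VAModule {V : Type*} [AddCommGroup V] [Module ℂ V] (A : VertexAlgebra V)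
    (W : Type*) [AddCommGroup W] [Module ℂ W] where
  Yw : V → ℤ → W →ₗ[ℂ] W
  Yw_add : ∀ (u v : V) (n : ℤ), Yw (u + v) n = Yw u n + Yw v n
  Yw_smul : ∀ (c : ℂ) (u : V) (n : ℤ), Yw (c • u) n = c • Yw u n
  vac_neg_one : ∀ w : W, Yw A.vac (-1) w = w
  vac_ne : ∀ n : ℤ, n ≠ -1 → Yw A.vac n = 0
  trunc : ∀ (u : V) (w : W), ∃ N : ℤ, ∀ n ≥ N, Yw u n w = 0
  weak_assoc : ∀ (u v : V) (w : W) (l : ℕ),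
    (∀ n : ℤ, (l : ℤ) ≤ n → Yw u n w = 0) →
    ∀ a b : ℤ,
      (∑ᶠ j : ℕ, gb (a + j) j • Yw u ((l : ℤ) - 1 - a - j) (Yw v ((j : ℤ) - b - 1) w)) =
      ∑ j ∈ Finset.range (l + 1),
        gb l j • Yw (A.coeff u ((l : ℤ) - j - a - 1) v) ((j : ℤ) - b - 1) w

/-- A ℤ-graded vertex algebra: a vertex algebra with an internal direct sum
decomposition `V = ⨁_{n∈ℤ} V_(n)` compatible with the vertex operator coefficients:
`u_n` maps `V_(k)` to `V_(k + m - n - 1)` for `u ∈ V_(m)`. -/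
structure GradedVA (V : Type*) [AddCommGroup V] [Module ℂ V] extends VertexAlgebra V where
  gr : ℤ → Submodule ℂ V
  internal : DirectSum.IsInternal gr
  vac_mem : vac ∈ gr 0
  coeff_grade : ∀ {m : ℤ} {u : V}, u ∈ gr m → ∀ (n : ℤ) {k : ℤ} {v : V}, v ∈ gr k →
    coeff u n v ∈ gr (k + m - n - 1)

/-- An ℕ-graded vertex algebra: `V_(n) = 0` for `n < 0`. -/
def GradedVA.IsNNGraded {V : Type*} [AddCommGroup V] [Module ℂ V] (A : GradedVA V) : Prop :=
  ∀ n : ℤ, n < 0 → A.gr n = ⊥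

/-- The property that a family of coefficient operators `Yw u n = u_n` defines a weak
module structure over the vertex algebra `A` on `W`: linearity in `u`, lower
truncation, the vacuum property `Y_W(1,x) = id`, and the Borcherds (Jacobi) identity. -/
def IsWeakModule {V W : Type*} [AddCommGroup V] [Module ℂ V] [AddCommGroup W] [Module ℂ W]
    (A : VertexAlgebra V) (Yw : V → ℤ → W →ₗ[ℂ] W) : Prop :=
  (∀ (u v : V) (n : ℤ), Yw (u + v) n = Yw u n + Yw v n) ∧
  (∀ (c : ℂ) (u : V) (n : ℤ), Yw (c • u) n = c • Yw u n) ∧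
  (∀ (u : V) (w : W), ∃ N : ℤ, ∀ n ≥ N, Yw u n w = 0) ∧
  (∀ w : W, Yw A.vac (-1) w = w) ∧
  (∀ n : ℤ, n ≠ -1 → Yw A.vac n = 0) ∧
  (∀ (u v : V) (w : W) (p q r : ℤ),
    (∑ᶠ i : ℕ, gb p i • Yw (A.coeff u (r + i) v) (p + q - i) w) =
    ∑ᶠ i : ℕ, ((-1 : ℂ) ^ i * gb r i) •
      (Yw u (p + r - i) (Yw v (q + i) w)
        - ((-1 : ℂ) ^ r) • Yw v (q + r - i) (Yw u (p + i) w)))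

/-- An ℕ-grading on a weak module: an internal direct sum `W = ⨁ W_(n)` with
`W_(n) = 0` for `n < 0` and `u_n : W_(k) → W_(k + m - n - 1)` for `u ∈ V_(m)`. -/
def IsNNGradedModule {V W : Type*} [AddCommGroup V] [Module ℂ V] [AddCommGroup W]
    [Module ℂ W] (A : GradedVA V) (Yw : V → ℤ → W →ₗ[ℂ] W)
    (wgr : ℤ → Submodule ℂ W) : Prop :=
  DirectSum.IsInternal wgr ∧ (∀ n : ℤ, n < 0 → wgr n = ⊥) ∧
  (∀ {m : ℤ} {u : V}, u ∈ A.gr m → ∀ (n : ℤ) {k : ℤ} {w : W}, w ∈ wgr k →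
    Yw u n w ∈ wgr (k + m - n - 1))

/-- The top level `T(W)` of a module: the subspace of `w ∈ W` with `u_n w = 0`
whenever `wt u - n - 1 < 0` for homogeneous `u`. -/
def topLevel {V W : Type*} [AddCommGroup V] [Module ℂ V] [AddCommGroup W] [Module ℂ W]
    (A : GradedVA V) (Yw : V → ℤ → W →ₗ[ℂ] W) : Submodule ℂ W where
  carrier := {w | ∀ (m : ℤ) (u : V), u ∈ A.gr m → ∀ n : ℤ, m - n - 1 < 0 → Yw u n w = 0}
  zero_mem' := by intro m u hu n hn; simp
  add_mem' := by
    intro a b ha hb m u hu n hn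
    rw [map_add, ha m u hu n hn, hb m u hu n hn, add_zero]
  smul_mem' := by intro c a ha m u hu n hn; rw [map_smul, ha m u hu n hn, smul_zero]

/-! Everything is read off the Borcherds identity of the module applied to a top-level vector
`w`, on which every mode `u_n` with `wt u - n - 1 < 0` vanishes. For `r = 0` it is the
commutator formula, and each `(v_i u)_k w` in `[v_n, o(u)] w` has negative degree whenever
`v_n w` does. For `p = wt u` the terms `u_{p+i} w` drop out of the right-hand side, while
`C(wt u, i) = 0` for `i > wt u` makes the left-hand side the finite sum defining `o(u * v)` or
`o(x)`, `x ∈ O(V)`; for `r = -1` only `o(u) o(v) w` survives on the right, and for `r ≤ -2`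
nothing does. -/

open Finset

lemma gb_zero_right (a : ℤ) : gb a 0 = 1 := by
  simp [gb]

lemma gb_natCast_eq_zero {m j : ℕ} (h : m < j) : gb (m : ℤ) j = 0 := by
  rw [gb, prod_eq_zero (mem_range.2 h) (by simp), zero_div]

lemma gb_zero_left {i : ℕ} (h : i ≠ 0) : gb 0 i = 0 := by
  simpa using gb_natCast_eq_zero (m := 0) (Nat.pos_of_ne_zero h)

lemma finsum_gb_natCast_smul {M : Type*} [AddCommMonoid M] [Module ℂ M] (m : ℕ) (f : ℕ → M) :
    ∑ᶠ i : ℕ, gb (m : ℤ) i • f i = ∑ i ∈ range (m + 1), gb (m : ℤ) i • f i := by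
  refine finsum_eq_finsetSum_of_support_subset _ fun i hi => ?_
  by_contra hout
  simp only [coe_range, Set.mem_Iio, not_lt] at hout
  exact hi (by simp only [gb_natCast_eq_zero (by omega : m < i), zero_smul])

section TopLevel

variable {V W : Type*} [AddCommGroup V] [Module ℂ V] [AddCommGroup W] [Module ℂ W]
  {A : GradedVA V} {Yw : V → ℤ → W →ₗ[ℂ] W}

lemma apply_eq_zero_of_mem_topLevel {w : W} (hw : w ∈ topLevel A Yw) {m : ℤ} {u : V}
    (hu : u ∈ A.gr m) {n : ℤ} (hn : m - n - 1 < 0) : Yw u n w = 0 :=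
  hw m u hu n hn

lemma IsWeakModule.borcherds (hW : IsWeakModule A.toVertexAlgebra Yw) (u v : V) (w : W)
    (p q r : ℤ) :
    (∑ᶠ i : ℕ, gb p i • Yw (A.coeff u (r + i) v) (p + q - i) w) =
      ∑ᶠ i : ℕ, ((-1 : ℂ) ^ i * gb r i) •
        (Yw u (p + r - i) (Yw v (q + i) w)
          - ((-1 : ℂ) ^ r) • Yw v (q + r - i) (Yw u (p + i) w)) :=
  hW.2.2.2.2.2 u v w p q r

lemma IsWeakModule.commutator (hW : IsWeakModule A.toVertexAlgebra Yw) (u v : V) (w : W)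
    (p q : ℤ) :
    (∑ᶠ i : ℕ, gb p i • Yw (A.coeff u i v) (p + q - i) w) =
      Yw u p (Yw v q w) - Yw v q (Yw u p w) := by
  have hB := hW.borcherds u v w p q 0
  rw [finsum_eq_single (fun i : ℕ => ((-1 : ℂ) ^ i * gb 0 i) • _) 0
    fun i hi => by rw [gb_zero_left hi, mul_zero, zero_smul]] at hB
  simpa [gb_zero_right] using hB

lemma IsWeakModule.borcherds_of_mem_topLevel (hW : IsWeakModule A.toVertexAlgebra Yw)
    {wu : ℕ} {u : V} (hu : u ∈ A.gr wu) (v : V) {w : W} (hw : w ∈ topLevel A Yw) (q r : ℤ) :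
    ∑ j ∈ range (wu + 1), gb (wu : ℤ) j • Yw (A.coeff u (r + j) v) (wu + q - j) w =
      ∑ᶠ i : ℕ, ((-1 : ℂ) ^ i * gb r i) • Yw u (wu + r - i) (Yw v (q + i) w) := by
  rw [← finsum_gb_natCast_smul, hW.borcherds]
  refine finsum_congr fun i => ?_
  rw [apply_eq_zero_of_mem_topLevel hw hu (n := wu + i) (by omega), map_zero, smul_zero,
    sub_zero]

theorem IsWeakModule.zeroMode_mem_topLevel (hW : IsWeakModule A.toVertexAlgebra Yw)
    {wu : ℕ} {u : V} (hu : u ∈ A.gr wu) {w : W} (hw : w ∈ topLevel A Yw) :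
    Yw u (wu - 1) w ∈ topLevel A Yw := by
  intro m v hv n hn
  have hcomm := hW.commutator v u w n (wu - 1)
  have hvanish : ∀ i : ℕ, Yw (A.coeff v i u) (n + (wu - 1) - i) w = 0 := fun i =>
    apply_eq_zero_of_mem_topLevel hw (A.coeff_grade hv i hu) (by omega)
  simp only [hvanish, smul_zero, finsum_zero,
    apply_eq_zero_of_mem_topLevel hw hv hn, map_zero, sub_zero] at hcomm
  exact hcomm.symm

theorem IsWeakModule.zeroMode_mul (hW : IsWeakModule A.toVertexAlgebra Yw)
    {wu wv : ℕ} {u v : V} (hu : u ∈ A.gr wu) (hv : v ∈ A.gr wv) {w : W}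
    (hw : w ∈ topLevel A Yw) :
    ∑ j ∈ range (wu + 1),
        gb (wu : ℤ) j • Yw (A.coeff u ((j : ℤ) - 1) v) ((wu : ℤ) + (wv : ℤ) - j - 1) w =
      Yw u ((wu : ℤ) - 1) (Yw v ((wv : ℤ) - 1) w) := by
  have hB := hW.borcherds_of_mem_topLevel hu v hw (wv - 1) (-1)
  rw [finsum_eq_single _ 0 fun i hi => by
    rw [apply_eq_zero_of_mem_topLevel hw hv (by omega), map_zero, smul_zero]] at hB
  simp only [Nat.cast_zero, pow_zero, gb_zero_right, mul_one, one_smul, sub_zero, add_zero,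
    ← sub_eq_add_neg] at hB
  refine (sum_congr rfl fun j _ => ?_).trans hB
  rw [show (j : ℤ) - 1 = -1 + j by ring, show (wu : ℤ) + wv - j - 1 = wu + (wv - 1) - j by ring]

theorem IsWeakModule.zeroMode_O_eq_zero (hW : IsWeakModule A.toVertexAlgebra Yw)
    {wu wv : ℕ} {u v : V} (hu : u ∈ A.gr wu) (hv : v ∈ A.gr wv) {n : ℤ} (hn : n ≤ -2) {w : W}
    (hw : w ∈ topLevel A Yw) :
    ∑ j ∈ range (wu + 1),
        gb (wu : ℤ) j • Yw (A.coeff u (n + j) v) ((wu : ℤ) + (wv : ℤ) - n - j - 2) w = 0 := by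
  have hB := hW.borcherds_of_mem_topLevel hu v hw (wv - n - 2) n
  have hv0 : ∀ i : ℕ, Yw v (wv - n - 2 + i) w = 0 := fun i =>
    apply_eq_zero_of_mem_topLevel hw hv (by omega)
  simp only [hv0, map_zero, smul_zero, finsum_zero] at hB
  refine (sum_congr rfl fun j _ => ?_).trans hB
  rw [show (wu : ℤ) + wv - n - j - 2 = wu + (wv - n - 2) - j by ring]

end TopLevel

theorem statement7_general {V W : Type*} [AddCommGroup V] [Module ℂ V]
    [AddCommGroup W] [Module ℂ W] (A : GradedVA V)
    (Yw : V → ℤ → W →ₗ[ℂ] W)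
    (hW : IsWeakModule A.toVertexAlgebra Yw) :
    -- (1) `o(u)` preserves the top level
    (∀ (wu : ℕ) (u : V), u ∈ A.gr (wu : ℤ) → ∀ w ∈ topLevel A Yw,
      Yw u ((wu : ℤ) - 1) w ∈ topLevel A Yw) ∧
    -- (2) `o(u * v) w = o(u) o(v) w` on the top level, where
    -- `u * v = Σ_{j=0}^{wt u} C(wt u, j) u_{j-1} v`
    (∀ (wu wv : ℕ) (u v : V), u ∈ A.gr (wu : ℤ) → v ∈ A.gr (wv : ℤ) →
      ∀ w ∈ topLevel A Yw,
        ∑ j ∈ Finset.range (wu + 1),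
          gb (wu : ℤ) j • Yw (A.coeff u ((j : ℤ) - 1) v) ((wu : ℤ) + (wv : ℤ) - j - 1) w =
        Yw u ((wu : ℤ) - 1) (Yw v ((wv : ℤ) - 1) w)) ∧
    -- (3) `o(x) w = 0` for `x = Res_x x^n Y((x+1)^{L(0)}u, x)v ∈ O(V)`, `n ≤ -2`
    (∀ (wu wv : ℕ) (u v : V), u ∈ A.gr (wu : ℤ) → v ∈ A.gr (wv : ℤ) →
      ∀ n : ℤ, n ≤ -2 → ∀ w ∈ topLevel A Yw,
        ∑ j ∈ Finset.range (wu + 1),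
          gb (wu : ℤ) j •
            Yw (A.coeff u (n + j) v) ((wu : ℤ) + (wv : ℤ) - n - j - 2) w = 0) :=
  ⟨fun _ _ hu _ hw => hW.zeroMode_mem_topLevel hu hw,
    fun _ _ _ _ hu hv _ hw => hW.zeroMode_mul hu hv hw,
    fun _ _ _ _ hu hv _ hn _ hw => hW.zeroMode_O_eq_zero hu hv hn hw⟩

/-- Zhu's theorem on the top level: for an ℕ-graded vertex algebra `V`
and an ℕ-gradable weak `V`-module `W`, the zero mode `o(u) = u_{wt u - 1}` preserves
the top level `T(W)`, and `u + O(V) ↦ o(u)` defines an `A(V)`-module structure on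
`T(W)`: `o(u*v)w = o(u)o(v)w`, and `o(x)w = 0` for `x` among the spanning elements
`Res_x x^n Y((x+1)^{L(0)}u, x)v` (`n ≤ -2`) of `O(V)`. -/
theorem statement7 {V W : Type*} [AddCommGroup V] [Module ℂ V]
    [AddCommGroup W] [Module ℂ W] (A : GradedVA V) (hA : A.IsNNGraded)
    (Yw : V → ℤ → W →ₗ[ℂ] W) (wgr : ℤ → Submodule ℂ W)
    (hW : IsWeakModule A.toVertexAlgebra Yw)
    (hWgr : IsNNGradedModule A Yw wgr) :
    -- (1) `o(u)` preserves the top level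
    (∀ (wu : ℕ) (u : V), u ∈ A.gr (wu : ℤ) → ∀ w ∈ topLevel A Yw,
      Yw u ((wu : ℤ) - 1) w ∈ topLevel A Yw) ∧
    -- (2) `o(u * v) w = o(u) o(v) w` on the top level, where
    -- `u * v = Σ_{j=0}^{wt u} C(wt u, j) u_{j-1} v`
    (∀ (wu wv : ℕ) (u v : V), u ∈ A.gr (wu : ℤ) → v ∈ A.gr (wv : ℤ) →
      ∀ w ∈ topLevel A Yw,
        ∑ j ∈ Finset.range (wu + 1),
          gb (wu : ℤ) j • Yw (A.coeff u ((j : ℤ) - 1) v) ((wu : ℤ) + (wv : ℤ) - j - 1) w =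
        Yw u ((wu : ℤ) - 1) (Yw v ((wv : ℤ) - 1) w)) ∧
    -- (3) `o(x) w = 0` for `x = Res_x x^n Y((x+1)^{L(0)}u, x)v ∈ O(V)`, `n ≤ -2`
    (∀ (wu wv : ℕ) (u v : V), u ∈ A.gr (wu : ℤ) → v ∈ A.gr (wv : ℤ) →
      ∀ n : ℤ, n ≤ -2 → ∀ w ∈ topLevel A Yw,
        ∑ j ∈ Finset.range (wu + 1),
          gb (wu : ℤ) j •
            Yw (A.coeff u (n + j) v) ((wu : ℤ) + (wv : ℤ) - n - j - 2) w = 0) :=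
  statement7_general A Yw hW
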